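/- arXiv:1309.0636 — 6 statements merged into one kernel-verified Lean document; each statement's English description precedes it below -/
import Mathlib

section
/- Let G be a group, i₁, i₂, s nonnegative integers with i₁ ≤ s and i₂ ≤ s, and suppose that [G⁽ⁱ¹⁺¹⁾, G⁽ⁱ²⁾] = 1 and [G⁽ⁱ¹⁾, G⁽ⁱ²⁺¹⁾] = 1. Then for all a ∈ G⁽ⁱ¹⁾, b ∈ G⁽ⁱ²⁾, and x ∈ G⁽ˢ⁾, one has [a,b]ˣ = [a,b]. -/
open scoped commutatorElement

theorem Subgroup.commute_of_commutator_eq_bot {G : Type*} [Group G] {H K : Subgroup G}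
    (hHK : ⁅H, K⁆ = ⊥) {h k : G} (hh : h ∈ H) (hk : k ∈ K) : Commute h k := by
  have hmem := Subgroup.commutator_mem_commutator hh hk
  rw [hHK, Subgroup.mem_bot] at hmem
  exact commutatorElement_eq_one_iff_commute.mp hmem

theorem commutatorElement_mem_derivedSeries_min_succ {G : Type*} [Group G] {i j : ℕ} {a b : G}
    (ha : a ∈ derivedSeries G i) (hb : b ∈ derivedSeries G j) :
    ⁅a, b⁆ ∈ derivedSeries G (min i j + 1) := by
  rw [derivedSeries_succ]
  exact Subgroup.commutator_mem_commutator (derivedSeries_antitone G (min_le_left i j) ha)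
    (derivedSeries_antitone G (min_le_right i j) hb)

theorem stmt_2 {G : Type*} [Group G] (i₁ i₂ s : ℕ) (h₁ : i₁ ≤ s) (h₂ : i₂ ≤ s)
    (H₁ : ⁅derivedSeries G (i₁ + 1), derivedSeries G i₂⁆ = (⊥ : Subgroup G))
    (H₂ : ⁅derivedSeries G i₁, derivedSeries G (i₂ + 1)⁆ = (⊥ : Subgroup G)) :
    ∀ a ∈ derivedSeries G i₁, ∀ b ∈ derivedSeries G i₂, ∀ x ∈ derivedSeries G s,
      x⁻¹ * ⁅a, b⁆ * x = ⁅a, b⁆ := by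
  intro a ha b hb x hx
  have hab := commutatorElement_mem_derivedSeries_min_succ ha hb
  have hcomm : Commute ⁅a, b⁆ x := by
    rcases le_total i₁ i₂ with h | h
    · rw [min_eq_left h] at hab
      exact Subgroup.commute_of_commutator_eq_bot H₁ hab (derivedSeries_antitone G h₂ hx)
    · rw [min_eq_right h] at hab
      exact (Subgroup.commute_of_commutator_eq_bot H₂ (derivedSeries_antitone G h₁ hx) hab).symm
  rw [mul_assoc, hcomm.eq, inv_mul_cancel_left]
end

section
/- Let G be a group and i₁, i₂ nonnegative integers such that [G⁽ⁱ¹⁺¹⁾, G⁽ⁱ²⁾] = 1 and [G⁽ⁱ¹⁾, G⁽ⁱ²⁺¹⁾] = 1. Then the subgroup [G⁽ⁱ¹⁾, G⁽ⁱ²⁾] is abelian. -/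
/-!
Let `A = G⁽ⁱ¹⁾` and `B = G⁽ⁱ²⁾`. The hypotheses say that `[A, A]` centralizes `B` and `[B, B]`
centralizes `A`; by the three subgroups lemma they then also centralize `[A, B]`. Consequently,
on commutators `⁅x, y⁆` with `x ∈ A`, `y ∈ B`, conjugation by `a ∈ A` only acts on the second
entry, `a ⁅x, y⁆ a⁻¹ = ⁅x, a y a⁻¹⁆`, and conjugation by `b ∈ B` only on the first. These two
actions commute, so conjugation by `⁅a, b⁆ = a b a⁻¹ b⁻¹` fixes every such `⁅x, y⁆`.
-/

open scoped commutatorElement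

section

variable {G : Type*} [Group G]

theorem commutatorElement_mul_left_of_commute {c x y : G} (hy : Commute c y)
    (hxy : Commute c ⁅x, y⁆) : ⁅c * x, y⁆ = ⁅x, y⁆ := by
  calc ⁅c * x, y⁆ = c * (x * y * x⁻¹) * (c⁻¹ * y⁻¹) := by
        simp only [commutatorElement_def, mul_inv_rev, mul_assoc]
    _ = c * ⁅x, y⁆ * c⁻¹ := by
        rw [hy.inv_inv.eq]; simp only [commutatorElement_def, mul_assoc]
    _ = ⁅x, y⁆ := by rw [hxy.eq, mul_inv_cancel_right]

namespace Subgroup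

theorem commute_of_commutator_eq_bot_s3 {H K : Subgroup G} (h : ⁅H, K⁆ = ⊥) {u v : G}
    (hu : u ∈ H) (hv : v ∈ K) : Commute u v :=
  (mem_centralizer_iff.mp (commutator_eq_bot_iff_le_centralizer.mp h hu) v hv).symm

variable {A B : Subgroup G}

theorem commutator_commutator_commutator_self_eq_bot [A.Normal] (hAB : ⁅⁅A, A⁆, B⁆ = ⊥) :
    ⁅⁅A, B⁆, ⁅A, A⁆⁆ = ⊥ :=
  commutator_commutator_eq_bot_of_rotate
    (by rw [commutator_comm B, hAB, commutator_bot_left])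
    (eq_bot_iff.mpr (hAB ▸ commutator_mono (commutator_le_left _ _) le_rfl))

theorem conj_commutatorElement_of_mem_left [A.Normal] [B.Normal] (hAB : ⁅⁅A, A⁆, B⁆ = ⊥)
    {a x y : G} (ha : a ∈ A) (hx : x ∈ A) (hy : y ∈ B) :
    a * ⁅x, y⁆ * a⁻¹ = ⁅x, a * y * a⁻¹⁆ := by
  have hy' : a * y * a⁻¹ ∈ B := ‹B.Normal›.conj_mem y hy a
  have hax : ⁅a, x⁆ ∈ ⁅A, A⁆ := commutator_mem_commutator ha hx
  have hconj : a * x * a⁻¹ = ⁅a, x⁆ * x := by rw [commutatorElement_def, inv_mul_cancel_right]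
  rw [conjugate_commutatorElement, hconj]
  exact commutatorElement_mul_left_of_commute (commute_of_commutator_eq_bot_s3 hAB hax hy')
    (commute_of_commutator_eq_bot_s3 (commutator_commutator_commutator_self_eq_bot hAB)
      (commutator_mem_commutator hx hy') hax).symm

theorem conj_commutatorElement_of_mem_right [A.Normal] [B.Normal] (hBA : ⁅A, ⁅B, B⁆⁆ = ⊥)
    {b x y : G} (hb : b ∈ B) (hx : x ∈ A) (hy : y ∈ B) :
    b * ⁅x, y⁆ * b⁻¹ = ⁅b * x * b⁻¹, y⁆ := by
  have h := conj_commutatorElement_of_mem_left (commutator_comm A _ ▸ hBA) hb hy hx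
  rw [← commutatorElement_inv, ← commutatorElement_inv y, ← h]
  group

theorem commute_commutatorElement_of_mem [A.Normal] [B.Normal] (hAB : ⁅⁅A, A⁆, B⁆ = ⊥)
    (hBA : ⁅A, ⁅B, B⁆⁆ = ⊥) {a b x y : G} (ha : a ∈ A) (hb : b ∈ B) (hx : x ∈ A) (hy : y ∈ B) :
    Commute ⁅a, b⁆ ⁅x, y⁆ := by
  have hx₁ : b⁻¹ * x * b ∈ A := by simpa using ‹A.Normal›.conj_mem x hx b⁻¹
  have hy₁ : a⁻¹ * y * a ∈ B := by simpa using ‹B.Normal›.conj_mem y hy a⁻¹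
  have conj_inv_b : b⁻¹ * ⁅x, y⁆ * b = ⁅b⁻¹ * x * b, y⁆ := by
    simpa using conj_commutatorElement_of_mem_right hBA (inv_mem hb) hx hy
  have conj_inv_a : a⁻¹ * ⁅b⁻¹ * x * b, y⁆ * a = ⁅b⁻¹ * x * b, a⁻¹ * y * a⁆ := by
    simpa using conj_commutatorElement_of_mem_left hAB (inv_mem ha) hx₁ hy
  rw [commute_iff_eq, ← mul_inv_eq_iff_eq_mul]
  calc ⁅a, b⁆ * ⁅x, y⁆ * ⁅a, b⁆⁻¹ = a * (b * (a⁻¹ * (b⁻¹ * ⁅x, y⁆ * b) * a) * b⁻¹) * a⁻¹ := by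
        rw [commutatorElement_def]; group
    _ = a * ⁅x, a⁻¹ * y * a⁆ * a⁻¹ := by
        rw [conj_inv_b, conj_inv_a, conj_commutatorElement_of_mem_right hBA hb hx₁ hy₁]
        group
    _ = ⁅x, y⁆ := by
        rw [conj_commutatorElement_of_mem_left hAB ha hx hy₁]
        group

theorem commutator_commutator_self_eq_bot [A.Normal] [B.Normal] (hAB : ⁅⁅A, A⁆, B⁆ = ⊥)
    (hBA : ⁅A, ⁅B, B⁆⁆ = ⊥) : ⁅⁅A, B⁆, ⁅A, B⁆⁆ = ⊥ := by
  rw [commutator_eq_bot_iff_le_centralizer, commutator_le]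
  intro a ha b hb
  rw [← zpowers_le, le_centralizer_iff, commutator_le]
  intro x hx y hy
  rw [mem_centralizer_iff]
  rintro _ ⟨k, rfl⟩
  exact ((commute_commutatorElement_of_mem hAB hBA ha hb hx hy).zpow_left k).eq

end Subgroup

end

theorem stmt_3 {G : Type*} [Group G] (i₁ i₂ : ℕ)
    (H₁ : ⁅derivedSeries G (i₁ + 1), derivedSeries G i₂⁆ = (⊥ : Subgroup G))
    (H₂ : ⁅derivedSeries G i₁, derivedSeries G (i₂ + 1)⁆ = (⊥ : Subgroup G)) :
    ∀ x ∈ ⁅derivedSeries G i₁, derivedSeries G i₂⁆,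
      ∀ y ∈ ⁅derivedSeries G i₁, derivedSeries G i₂⁆, x * y = y * x := by
  rw [derivedSeries_succ] at H₁ H₂
  intro x hx y hy
  exact (Subgroup.commute_of_commutator_eq_bot_s3
    (Subgroup.commutator_commutator_self_eq_bot H₁ H₂) hx hy).eq
end

section
/- Let G be a group and M a normal abelian subgroup of G. Suppose G/M is generated by the images of elements b₁, …, b_s ∈ G. Then [M, G] = ∏_{i=1}^{s} [M, b_i], where [M, b_i] denotes the subgroup generated by commutators [m, b_i] with m ∈ M. -/
/-!
Let `N` be the subgroup generated by all `[M, bᵢ]`; clearly `N ≤ [M, G] ≤ M`. The elements `g`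
with `[M, g] ⊆ N` form a subgroup, since `N ≤ M` and `M` is normal. It contains every `bᵢ`, and
it contains `M` because `M` is abelian; as the `bᵢ` generate `G` modulo `M`, it is all of `G`.
-/

open scoped commutatorElement

namespace Subgroup

variable {G : Type*} [Group G]

theorem eq_top_of_le_of_forall_mem {M H : Subgroup G} [M.Normal] {ι : Type*} {b : ι → G}
    (hgen : closure (Set.range fun i => (QuotientGroup.mk (b i) : G ⧸ M)) = ⊤)
    (hMH : M ≤ H) (hb : ∀ i, b i ∈ H) : H = ⊤ := by
  have hmap : H.map (QuotientGroup.mk' M) = ⊤ := by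
    rw [eq_top_iff, ← hgen, closure_le]
    rintro _ ⟨i, rfl⟩
    exact mem_map_of_mem _ (hb i)
  rw [← comap_map_eq_self ((QuotientGroup.ker_mk' M).le.trans hMH), hmap, comap_top]

theorem closure_image_commutatorElement_le (H : Subgroup G) (g : G) :
    closure ((fun m => ⁅m, g⁆) '' (H : Set G)) ≤ ⁅H, ⊤⁆ := by
  rw [closure_le]
  rintro _ ⟨m, hm, rfl⟩
  exact commutator_mem_commutator hm (mem_top g)

/-- `{g | [M, g] ⊆ N}`: a subgroup as soon as `N ≤ M`, even when `N` is not normal. -/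
def centralizerMod (M N : Subgroup G) [M.Normal] (hNM : N ≤ M) : Subgroup G where
  carrier := {g | ∀ m ∈ M, ⁅m, g⁆ ∈ N}
  one_mem' m _ := by simp
  mul_mem' {g h} hg hh m hm := by
    have key : ⁅m, g * h⁆ = ⁅m, g⁆ * (⁅⁅m, h⁆, g⁆⁻¹ * ⁅m, h⁆) := by
      simp only [commutatorElement_def]; group
    rw [key]
    exact mul_mem (hg m hm) (mul_mem (inv_mem (hg _ (hNM (hh m hm)))) (hh m hm))
  inv_mem' {g} hg m hm := by
    have key : ⁅m, g⁻¹⁆ = ⁅g⁻¹ * m * g, g⁆⁻¹ := by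
      simp only [commutatorElement_def]; group
    rw [key]
    exact inv_mem (hg _ (by simpa using Normal.conj_mem ‹_› m hm g⁻¹))

theorem le_centralizerMod {M N : Subgroup G} [M.Normal] (hNM : N ≤ M)
    (hab : ∀ x ∈ M, ∀ y ∈ M, x * y = y * x) : M ≤ centralizerMod M N hNM := by
  intro y hy x hx
  rw [(commutatorElement_eq_one_iff_mul_comm).2 (hab x hx y hy)]
  exact N.one_mem

end Subgroup

theorem stmt_5 {G : Type*} [Group G] (M : Subgroup G) [M.Normal]
    (hab : ∀ x ∈ M, ∀ y ∈ M, x * y = y * x)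
    (s : ℕ) (b : Fin s → G)
    (hgen : Subgroup.closure (Set.range fun i => (QuotientGroup.mk (b i) : G ⧸ M)) = ⊤) :
    ⁅M, (⊤ : Subgroup G)⁆ =
      ⨆ i : Fin s, Subgroup.closure ((fun m => ⁅m, b i⁆) '' (M : Set G)) := by
  set N := ⨆ i : Fin s, Subgroup.closure ((fun m => ⁅m, b i⁆) '' (M : Set G))
  have hN : N ≤ ⁅M, ⊤⁆ := iSup_le fun i => M.closure_image_commutatorElement_le (b i)
  have hNM : N ≤ M := hN.trans (Subgroup.commutator_le_left M ⊤)
  have htop : M.centralizerMod N hNM = ⊤ :=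
    Subgroup.eq_top_of_le_of_forall_mem hgen (Subgroup.le_centralizerMod hNM hab) fun i m hm =>
      Subgroup.mem_iSup_of_mem i (Subgroup.subset_closure ⟨m, hm, rfl⟩)
  refine le_antisymm ((Subgroup.commutator_le ..).2 fun m hm g _ => ?_) hN
  exact (htop ▸ Subgroup.mem_top g : g ∈ M.centralizerMod N hNM) m hm
end

section
/- Let M be a normal abelian subgroup of a group G, let m ∈ M and b₁, …, b_k ∈ G with each b_i a δ_{k-1}-value in G (i.e., a value of the derived word δ_{k-1}). Then the iterated commutator [m, b₁, b₂, …, b_k] is a δ_k-value in G. -/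
/-! `[m, b₁]` is a `δ₁`-value for any `m`, and inductively `[m, b₁, …, b_j]` is a `δ_j`-value,
while `b_{j+1}` is a `δ_{k-1}`-value, hence a `δ_j`-value because the sets of `δ`-values
decrease. -/

open scoped commutatorElement

/-- The set of `δ_k`-values in `G`: `δ₀`-values are all elements, and a
`δ_{k+1}`-value is a commutator of two `δ_k`-values. -/
def deltaValues (G : Type*) [Group G] : ℕ → Set G
  | 0 => Set.univ
  | k + 1 => {x | ∃ a ∈ deltaValues G k, ∃ b ∈ deltaValues G k, x = ⁅a, b⁆}

section DeltaValues

variable {G : Type*} [Group G]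

theorem commutatorElement_mem_deltaValues_succ {k : ℕ} {a b : G}
    (ha : a ∈ deltaValues G k) (hb : b ∈ deltaValues G k) : ⁅a, b⁆ ∈ deltaValues G (k + 1) :=
  ⟨a, ha, b, hb, rfl⟩

theorem deltaValues_succ_subset (k : ℕ) : deltaValues G (k + 1) ⊆ deltaValues G k := by
  induction k with
  | zero => exact Set.subset_univ _
  | succ k ih =>
    rintro _ ⟨a, ha, b, hb, rfl⟩
    exact commutatorElement_mem_deltaValues_succ (ih ha) (ih hb)

theorem deltaValues_antitone : Antitone (deltaValues G) :=
  antitone_nat_of_succ_le deltaValues_succ_subset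

theorem foldl_commutatorElement_mem_deltaValues (l : List G) {j n : ℕ} {x : G}
    (hx : x ∈ deltaValues G j) (hl : ∀ y ∈ l, y ∈ deltaValues G n) (hn : j + l.length ≤ n + 1) :
    l.foldl (fun x y => ⁅x, y⁆) x ∈ deltaValues G (j + l.length) := by
  induction l generalizing j x with
  | nil => simpa using hx
  | cons y l ih =>
    rw [List.length_cons] at hn
    have hy : y ∈ deltaValues G j :=
      deltaValues_antitone (by omega) (hl y List.mem_cons_self)
    rw [List.foldl_cons, List.length_cons, ← add_assoc, add_right_comm]
    exact ih (commutatorElement_mem_deltaValues_succ hx hy)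
      (fun z hz => hl z (List.mem_cons_of_mem y hz)) (by omega)

end DeltaValues

theorem stmt_8_general {G : Type*} [Group G]
    (k : ℕ) (b : Fin k → G)
    (hb : ∀ i, b i ∈ deltaValues G (k - 1))
    (m : G) :
    (List.ofFn b).foldl (fun x y => ⁅x, y⁆) m ∈ deltaValues G k := by
  have h := foldl_commutatorElement_mem_deltaValues (List.ofFn b) (j := 0) (n := k - 1)
    (Set.mem_univ m) (by simpa [List.mem_ofFn] using hb) (by rw [List.length_ofFn]; omega)
  simpa using h

theorem stmt_8 {G : Type*} [Group G] (M : Subgroup G) [M.Normal]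
    (hab : ∀ x ∈ M, ∀ y ∈ M, x * y = y * x)
    (k : ℕ) (hk : 1 ≤ k) (b : Fin k → G)
    (hb : ∀ i, b i ∈ deltaValues G (k - 1))
    (m : G) (hm : m ∈ M) :
    (List.ofFn b).foldl (fun x y => ⁅x, y⁆) m ∈ deltaValues G k :=
  stmt_8_general k b hb m
end

section
/- Let G be a compact topological group which is abelian and periodic (every element has finite order), and suppose G is profinite. Then G has finite exponent, i.e., there exists a positive integer e with xᵉ = 1 for all x ∈ G. -/
/-!
By periodicity the closed subgroups `{x | x ^ (n + 1) = 1}` cover `G`. A compact Hausdorff space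
is a Baire space, so one of them has nonempty interior and is therefore open; in a compact group an
open subgroup has finite index `k`, and then `x ^ (k * (n + 1)) = 1` for every `x`.
-/

open Set

theorem Subgroup.exists_isOpen_of_iUnion_eq_univ {G ι : Type*} [Group G] [TopologicalSpace G]
    [IsTopologicalGroup G] [BaireSpace G] [Countable ι] (H : ι → Subgroup G)
    (hclosed : ∀ i, IsClosed (H i : Set G)) (hcover : ⋃ i, (H i : Set G) = univ) :
    ∃ i, IsOpen (H i : Set G) := by
  obtain ⟨i, x, hx⟩ := nonempty_interior_of_iUnion_of_closed hclosed hcover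
  exact ⟨i, (H i).isOpen_of_mem_nhds (mem_interior_iff_mem_nhds.mp hx)⟩

theorem Subgroup.finiteIndex_of_isOpen {G : Type*} [Group G] [TopologicalSpace G]
    [IsTopologicalGroup G] [CompactSpace G] (H : Subgroup G) (hH : IsOpen (H : Set G)) :
    H.FiniteIndex :=
  have : Finite (G ⧸ H) := H.quotient_finite_of_isOpen hH
  H.finiteIndex_of_finite_quotient

theorem Monoid.ExponentExists.of_finiteIndex {G : Type*} [Group G] (H : Subgroup G) [H.Normal]
    [H.FiniteIndex] (hH : Monoid.ExponentExists H) : Monoid.ExponentExists G := by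
  obtain ⟨n, hn, hpow⟩ := hH
  refine ⟨H.index * n, Nat.mul_pos (Nat.pos_of_ne_zero Subgroup.FiniteIndex.index_ne_zero) hn, fun g => ?_⟩
  rw [pow_mul]
  exact congrArg Subtype.val (hpow ⟨_, H.pow_index_mem g⟩)

section PowKer

variable {G : Type*} [CommGroup G]

theorem exponentExists_ker_powMonoidHom_succ (n : ℕ) :
    Monoid.ExponentExists (powMonoidHom (n + 1) : G →* G).ker :=
  ⟨n + 1, n.succ_pos, fun x => Subtype.ext x.2⟩

theorem iUnion_ker_powMonoidHom_succ_eq_univ (hG : IsMulTorsion G) :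
    ⋃ n : ℕ, ((powMonoidHom (n + 1) : G →* G).ker : Set G) = univ := by
  refine eq_univ_of_forall fun x => mem_iUnion.mpr ⟨orderOf x - 1, ?_⟩
  rw [SetLike.mem_coe, MonoidHom.mem_ker, powMonoidHom_apply,
    Nat.sub_add_cancel (hG x).orderOf_pos, pow_orderOf_eq_one]

theorem isClosed_ker_powMonoidHom [TopologicalSpace G] [ContinuousMul G] [T1Space G] (n : ℕ) :
    IsClosed ((powMonoidHom n : G →* G).ker : Set G) :=
  isClosed_singleton.preimage (continuous_pow n)

end PowKer

theorem stmt_12_general {G : Type*} [CommGroup G] [TopologicalSpace G] [IsTopologicalGroup G]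
    [CompactSpace G] [T2Space G]
    (hper : ∀ x : G, IsOfFinOrder x) :
    ∃ e : ℕ, 0 < e ∧ ∀ x : G, x ^ e = 1 := by
  obtain ⟨n, hopen⟩ := Subgroup.exists_isOpen_of_iUnion_eq_univ _
    (fun n => isClosed_ker_powMonoidHom (n + 1)) (iUnion_ker_powMonoidHom_succ_eq_univ hper)
  have := Subgroup.finiteIndex_of_isOpen _ hopen
  exact Monoid.ExponentExists.of_finiteIndex _ (exponentExists_ker_powMonoidHom_succ n)

theorem stmt_12 {G : Type*} [CommGroup G] [TopologicalSpace G] [IsTopologicalGroup G]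
    [CompactSpace G] [T2Space G] [TotallyDisconnectedSpace G]
    (hper : ∀ x : G, IsOfFinOrder x) :
    ∃ e : ℕ, 0 < e ∧ ∀ x : G, x ^ e = 1 :=
  stmt_12_general hper
end

section
/- Let G be a profinite group with an open normal soluble subgroup, and assume G is periodic. Then G has finite exponent and is locally finite. -/
/-!
If `f : G →* A` has closed kernel and commutative target, the sets `{x | f x ^ (k + 1) = 1}` are
closed subgroups covering the periodic compact group `G`, so by Baire one of them is open, hence
of finite index, and `f` has a uniform exponent. Commutators pass to closures, so the closure of
`[G, G]` has smaller derived length; applying this to `G → G / closure [G, G]` and inducting on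
the derived length gives the compact soluble group `N` a finite exponent, and then `G` too, since
`x ^ |G : N| ∈ N`. For local finiteness, a finitely
generated `H ≤ G` contains the finite-index soluble subgroup `H ∩ N`, finitely generated by
Schreier; a finitely generated periodic abelian group is finite, so induction along the derived
series shows `H ∩ N`, and hence `H`, is finite.
-/

open scoped commutatorElement

theorem Subgroup.commutator_topologicalClosure_le {G : Type*} [Group G] [TopologicalSpace G]
    [IsTopologicalGroup G] (H K : Subgroup G) :
    ⁅H.topologicalClosure, K.topologicalClosure⁆ ≤ ⁅H, K⁆.topologicalClosure :=
  Subgroup.commutator_le.mpr fun _ hx _ hy =>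
    map_mem_closure₂ (f := fun x y : G => ⁅x, y⁆)
      (by simp only [commutatorElement_def]; fun_prop) hx hy
      fun _ ha _ hb => Subgroup.commutator_mem_commutator ha hb

section DerivedSeries

variable {G : Type*} [Group G]

theorem map_subtype_derivedSeries_commutator (n : ℕ) :
    (derivedSeries (commutator G) n).map (commutator G).subtype = derivedSeries G (n + 1) := by
  induction n with
  | zero =>
    rw [derivedSeries_zero, ← MonoidHom.range_eq_map, Subgroup.range_subtype, derivedSeries_one]
  | succ n ih => rw [derivedSeries_succ, Subgroup.map_commutator, ih, ← derivedSeries_succ]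

theorem derivedSeries_commutator_eq_bot {d : ℕ} (hd : derivedSeries G (d + 1) = ⊥) :
    derivedSeries (commutator G) d = ⊥ := by
  rwa [← Subgroup.map_eq_bot_iff_of_injective _ (commutator G).subtype_injective,
    map_subtype_derivedSeries_commutator]

variable [TopologicalSpace G] [IsTopologicalGroup G]

theorem map_subtype_derivedSeries_topologicalClosure_le (S : Subgroup G) (n : ℕ) :
    (derivedSeries S.topologicalClosure n).map S.topologicalClosure.subtype ≤
      ((derivedSeries S n).map S.subtype).topologicalClosure := by
  induction n with
  | zero =>
    simp only [derivedSeries_zero, ← MonoidHom.range_eq_map, Subgroup.range_subtype, le_refl]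
  | succ n ih =>
    rw [derivedSeries_succ, derivedSeries_succ, Subgroup.map_commutator, Subgroup.map_commutator]
    exact (Subgroup.commutator_mono ih ih).trans (Subgroup.commutator_topologicalClosure_le _ _)

theorem derivedSeries_topologicalClosure_commutator_eq_bot [T2Space G] {d : ℕ}
    (hd : derivedSeries G (d + 1) = ⊥) :
    derivedSeries (commutator G).topologicalClosure d = ⊥ := by
  rw [← Subgroup.map_eq_bot_iff_of_injective _ (Subgroup.subtype_injective _), ← le_bot_iff]
  refine (map_subtype_derivedSeries_topologicalClosure_le _ d).trans ?_
  rw [map_subtype_derivedSeries_commutator, hd]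
  exact Subgroup.topologicalClosure_minimal _ le_rfl (by simp)

end DerivedSeries

theorem Monoid.exponentExists_of_pow_mem {G : Type*} [Group G] {T : Subgroup G} {e : ℕ}
    (he : 0 < e) (hpow : ∀ x : G, x ^ e ∈ T) (hT : Monoid.ExponentExists T) :
    Monoid.ExponentExists G := by
  obtain ⟨e', he', hT⟩ := hT
  refine ⟨e * e', Nat.mul_pos he he', fun x => ?_⟩
  rw [pow_mul]
  exact congrArg Subtype.val (hT ⟨_, hpow x⟩)

theorem exists_pow_eq_one_of_isClosed_ker {G A : Type*} [Group G] [TopologicalSpace G]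
    [IsTopologicalGroup G] [CompactSpace G] [T2Space G] [CommGroup A] (f : G →* A)
    (hf : IsClosed (f.ker : Set G)) (htor : IsMulTorsion G) :
    ∃ e, 0 < e ∧ ∀ x, f x ^ e = 1 := by
  let C : ℕ → Subgroup G := fun k => ((powMonoidHom (k + 1)).comp f).ker
  have hC : ∀ k, (C k : Set G) = (· ^ (k + 1)) ⁻¹' f.ker := fun k => by
    ext; simp [C]
  have hclosed : ∀ k, IsClosed (C k : Set G) := fun k => by
    rw [hC]; exact hf.preimage (continuous_pow _)
  have hcover : ⋃ k, (C k : Set G) = Set.univ := by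
    refine Set.eq_univ_of_forall fun x => Set.mem_iUnion.mpr ?_
    obtain ⟨n, hn, hxn⟩ := (htor x).exists_pow_eq_one
    exact ⟨n - 1, by rw [hC]; simp [Nat.sub_add_cancel hn, hxn]⟩
  obtain ⟨k, x, hx⟩ := nonempty_interior_of_iUnion_of_closed hclosed hcover
  have hopen : IsOpen (C k : Set G) := (C k).isOpen_of_mem_nhds (mem_interior_iff_mem_nhds.mp hx)
  have : Finite (G ⧸ C k) := (C k).quotient_finite_of_isOpen hopen
  refine ⟨(C k).index * (k + 1),
    Nat.mul_pos (Nat.pos_of_ne_zero Subgroup.index_ne_zero_of_finite) k.succ_pos, fun y => ?_⟩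
  rw [pow_mul, ← map_pow]
  simpa [C] using (C k).pow_index_mem y

theorem exponentExists_of_derivedSeries_eq_bot (d : ℕ) {G : Type*} [Group G]
    [TopologicalSpace G] [IsTopologicalGroup G] [CompactSpace G] [T2Space G]
    (htor : IsMulTorsion G) (hd : derivedSeries G d = ⊥) : Monoid.ExponentExists G := by
  induction d generalizing G with
  | zero =>
    rw [derivedSeries_zero, Subgroup.eq_bot_iff_forall] at hd
    exact ⟨1, one_pos, fun x => hd _ (Subgroup.mem_top _)⟩
  | succ d ih =>
    let T := (commutator G).topologicalClosure
    have hT : IsClosed (T : Set G) := Subgroup.isClosed_topologicalClosure _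
    have : CompactSpace T := isCompact_iff_compactSpace.mp hT.isCompact
    have hTexp : Monoid.ExponentExists T :=
      ih (htor.subgroup T) (derivedSeries_topologicalClosure_commutator_eq_bot hd)
    obtain ⟨e, he, hpow⟩ := exists_pow_eq_one_of_isClosed_ker
      (QuotientGroup.mk' T : G →* TopologicalAbelianization G)
      (by rwa [QuotientGroup.ker_mk']) htor
    exact Monoid.exponentExists_of_pow_mem he
      (fun x => (QuotientGroup.eq_one_iff _).mp (by simpa using hpow x)) hTexp

theorem finite_of_derivedSeries_eq_bot (d : ℕ) {G : Type*} [Group G] [Group.FG G]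
    (htor : IsMulTorsion G) (hd : derivedSeries G d = ⊥) : Finite G := by
  induction d generalizing G with
  | zero =>
    rw [derivedSeries_zero, Subgroup.eq_bot_iff_forall] at hd
    have : Subsingleton G := ⟨fun x y => (hd x trivial).trans (hd y trivial).symm⟩
    exact Finite.of_subsingleton
  | succ d ih =>
    have hsurj : Function.Surjective (Abelianization.of : G →* Abelianization G) :=
      Quotient.mk''_surjective
    have : Group.FG (Abelianization G) := Group.fg_of_surjective hsurj
    have : Finite (Abelianization G) :=
      CommGroup.finite_of_fg_isMulTorsion _ (htor.of_surjective hsurj)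
    have : Finite (G ⧸ commutator G) := this
    have : (commutator G).FiniteIndex := Subgroup.finiteIndex_of_finite_quotient
    have := ih (htor.subgroup _) (derivedSeries_commutator_eq_bot hd)
    exact (Subgroup.finite_iff_finite_and_finiteIndex (commutator G)).mpr ⟨this, inferInstance⟩

theorem finite_of_isSolvable_of_finiteIndex {G : Type*} [Group G] [Group.FG G]
    (htor : IsMulTorsion G) (M : Subgroup G) [M.FiniteIndex] [Group.IsSolvable M] : Finite G := by
  obtain ⟨d, hd⟩ := Group.IsSolvable.solvable (G := M)
  have := finite_of_derivedSeries_eq_bot d (htor.subgroup M) hd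
  exact (Subgroup.finite_iff_finite_and_finiteIndex M).mpr ⟨this, inferInstance⟩

instance Subgroup.isSolvable_subgroupOf {G : Type*} [Group G] (H K : Subgroup G)
    [Group.IsSolvable H] : Group.IsSolvable (H.subgroupOf K) :=
  Group.isSolvable_of_isSolvable_injective
    (f := (K.subtype.comp (H.subgroupOf K).subtype).codRestrict H fun x => x.2)
    ((MonoidHom.injective_codRestrict _ _ _).mpr
      (K.subtype_injective.comp (Subgroup.subtype_injective _)))

theorem stmt_13_general {G : Type*} [Group G] [TopologicalSpace G] [IsTopologicalGroup G]
    [CompactSpace G] [T2Space G]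
    (N : Subgroup G) [N.Normal] (hNopen : IsOpen (N : Set G)) (hNsol : IsSolvable N)
    (hper : ∀ x : G, IsOfFinOrder x) :
    (∃ e : ℕ, 0 < e ∧ ∀ x : G, x ^ e = 1) ∧
      ∀ H : Subgroup G, H.FG → Finite H := by
  have : CompactSpace N := isCompact_iff_compactSpace.mp (N.isClosed_of_isOpen hNopen).isCompact
  have : Finite (G ⧸ N) := N.quotient_finite_of_isOpen hNopen
  obtain ⟨d, hd⟩ := hNsol.solvable
  refine ⟨Monoid.exponentExists_of_pow_mem (Nat.pos_of_ne_zero N.index_ne_zero_of_finite)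
    N.pow_index_mem (exponentExists_of_derivedSeries_eq_bot d (IsMulTorsion.subgroup hper N) hd),
    fun H hH => ?_⟩
  have : Group.FG H := (Group.fg_iff_subgroup_fg H).mpr hH
  have : N.FiniteIndex := Subgroup.finiteIndex_of_finite_quotient
  have : Group.IsSolvable N := hNsol
  exact finite_of_isSolvable_of_finiteIndex (IsMulTorsion.subgroup hper H) (N.subgroupOf H)

theorem stmt_13 {G : Type*} [Group G] [TopologicalSpace G] [IsTopologicalGroup G]
    [CompactSpace G] [T2Space G] [TotallyDisconnectedSpace G]
    (N : Subgroup G) [N.Normal] (hNopen : IsOpen (N : Set G)) (hNsol : IsSolvable N)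
    (hper : ∀ x : G, IsOfFinOrder x) :
    (∃ e : ℕ, 0 < e ∧ ∀ x : G, x ^ e = 1) ∧
      ∀ H : Subgroup G, H.FG → Finite H :=
  stmt_13_general N hNopen hNsol hper
end
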